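/- (Iterative Hard Thresholding error bound.) Let A be an n×N real matrix satisfying aRIP(2k; L₂, U₂) and aRIP(3k; L₃, U₃), let ω ∈ (0,1), and define μ := 2√2·max{ω(1+U₃) − 1, 1 − ω(1−L₃)} and ξ := 2ω√(1+U₂); assume μ < 1. Let x ∈ ℝ^N be k-sparse, let e ∈ ℝⁿ, and set y = Ax + e. Consider any IHT trajectory: x⁰ := 0, and for each l ≥ 1: u^l := x^{l−1} + ω·A*(y − A x^{l−1}); T^l is an index set with |T^l| = k selecting k largest-magnitude entries of u^l; and x^l := (u^l)_{T^l}. Then for every l ≥ 0, ‖x − x^l‖₂ ≤ μ^l·‖x‖₂ + (ξ/(1−μ))·‖e‖₂. -/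

import Mathlib

open Finset Matrix

noncomputable def enormR {α : Type*} [Fintype α] (v : α → ℝ) : ℝ :=
  Real.sqrt (∑ i, (v i) ^ 2)

def restr {N : ℕ} (I : Finset (Fin N)) (x : Fin N → ℝ) : Fin N → ℝ :=
  fun i => if i ∈ I then x i else 0

def sparse {N : ℕ} (k : ℕ) (x : Fin N → ℝ) : Prop :=
  (Finset.univ.filter fun i => x i ≠ 0).card ≤ k

def aRIP {n N : ℕ} (A : Matrix (Fin n) (Fin N) ℝ) (m : ℕ) (L U : ℝ) : Prop :=
  ∀ x : Fin N → ℝ, sparse m x →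
    (1 - L) * enormR x ^ 2 ≤ enormR (A.mulVec x) ^ 2 ∧
      enormR (A.mulVec x) ^ 2 ≤ (1 + U) * enormR x ^ 2

def selects {N : ℕ} (T : Finset (Fin N)) (v : Fin N → ℝ) : Prop :=
  ∀ i ∈ T, ∀ j ∉ T, |v j| ≤ |v i|

def subCols {n N : ℕ} (A : Matrix (Fin n) (Fin N) ℝ) (I : Finset (Fin N)) :
    Matrix (Fin n) I ℝ :=
  fun r c => A r (c : Fin N)

noncomputable def gram {n N : ℕ} (A : Matrix (Fin n) (Fin N) ℝ) (I : Finset (Fin N)) :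
    Matrix I I ℝ :=
  (subCols A I)ᵀ * subCols A I

noncomputable def pinvApply {n N : ℕ} (A : Matrix (Fin n) (Fin N) ℝ) (I : Finset (Fin N))
    (y : Fin n → ℝ) : I → ℝ :=
  ((gram A I)⁻¹ * (subCols A I)ᵀ).mulVec y

noncomputable def pinvVec {n N : ℕ} (A : Matrix (Fin n) (Fin N) ℝ) (I : Finset (Fin N))
    (y : Fin n → ℝ) : Fin N → ℝ :=
  fun i => if h : i ∈ I then pinvApply A I y ⟨i, h⟩ else 0


/-!
Let `S` be the support of `x` and `T` the set selected at step `l + 1`. The new error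
`x - x^{l+1}` lives on `S ∪ T`, and `x^{l+1}` is a best `k`-term approximation of `u^{l+1}`
there, so `‖x - x^{l+1}‖ ≤ 2 ‖(x - u^{l+1})_{S ∪ T}‖`. Moreover
`x - u^{l+1} = (1 - ω AᵀA)(x - x^l) - ω Aᵀe`. By aRIP(3k) the quadratic form of `1 - ω AᵀA` is
bounded by `δ ‖·‖²`, where `δ = max (ω(1 + U₃) - 1) (1 - ω(1 - L₃))`, on vectors supported on
`3k` indices, and polarization turns this into `‖((1 - ω AᵀA) v)_{S ∪ T}‖ ≤ δ ‖v‖`; by aRIP(2k),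
`‖(Aᵀe)_{S ∪ T}‖ ≤ √(1 + U₂) ‖e‖`. Hence `‖x - x^{l+1}‖ ≤ 2δ ‖x - x^l‖ + ξ ‖e‖` with `2δ ≤ μ`,
and unrolling this recursion gives the bound.
-/

namespace IHT

lemma le_of_sq_le_mul {a c : ℝ} (hc : 0 ≤ c) (h : a ^ 2 ≤ c * a) : a ≤ c := by
  nlinarith

section EuclideanNorm

variable {α : Type*} [Fintype α]

lemma enormR_eq_norm (v : α → ℝ) : enormR v = ‖WithLp.toLp 2 v‖ := by
  simp [enormR, EuclideanSpace.norm_eq]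

lemma enormR_nonneg (v : α → ℝ) : 0 ≤ enormR v := Real.sqrt_nonneg _

lemma enormR_sq (v : α → ℝ) : enormR v ^ 2 = v ⬝ᵥ v := by
  rw [enormR, Real.sq_sqrt (by positivity)]
  simp [dotProduct, sq]

lemma enormR_add_le (v w : α → ℝ) : enormR (v + w) ≤ enormR v + enormR w := by
  simpa only [enormR_eq_norm, WithLp.toLp_add] using norm_add_le _ _

lemma enormR_sub_comm (v w : α → ℝ) : enormR (v - w) = enormR (w - v) := by
  simpa only [enormR_eq_norm, WithLp.toLp_sub] using norm_sub_rev _ _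

lemma enormR_sub_le (v w : α → ℝ) : enormR (v - w) ≤ enormR v + enormR w := by
  simpa only [enormR_eq_norm, WithLp.toLp_sub] using norm_sub_le _ _

lemma enormR_smul (c : ℝ) (v : α → ℝ) : enormR (c • v) = |c| * enormR v := by
  simp only [enormR_eq_norm, WithLp.toLp_smul, norm_smul, Real.norm_eq_abs]

lemma dotProduct_le_enormR_mul (v w : α → ℝ) : v ⬝ᵥ w ≤ enormR v * enormR w := by
  have h := real_inner_le_norm (WithLp.toLp 2 w : EuclideanSpace ℝ α) (WithLp.toLp 2 v)
  rwa [EuclideanSpace.inner_toLp_toLp, star_trivial, ← enormR_eq_norm, ← enormR_eq_norm,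
    mul_comm] at h

end EuclideanNorm

section Support

variable {α : Type*}

def supportedOn (D : Finset α) : Submodule ℝ (α → ℝ) :=
  Submodule.pi (↑D)ᶜ fun _ => ⊥

lemma mem_supportedOn {D : Finset α} {v : α → ℝ} :
    v ∈ supportedOn D ↔ ∀ i ∉ D, v i = 0 := by
  simp [supportedOn, Submodule.mem_pi]

lemma supportedOn_mono {D E : Finset α} (h : D ⊆ E) : supportedOn D ≤ supportedOn E :=
  fun _ hv => mem_supportedOn.2 fun i hi => mem_supportedOn.1 hv i fun hD => hi (h hD)

variable {N : ℕ}

lemma mem_supportedOn_filter_ne (x : Fin N → ℝ) :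
    x ∈ supportedOn (univ.filter fun i => x i ≠ 0) :=
  mem_supportedOn.2 fun i hi => by simpa using hi

lemma sparse_of_mem_supportedOn {D : Finset (Fin N)} {m : ℕ} {v : Fin N → ℝ}
    (hv : v ∈ supportedOn D) (hD : D.card ≤ m) : sparse m v := by
  refine (card_le_card fun i hi => ?_).trans hD
  by_contra hiD
  exact (mem_filter.1 hi).2 (mem_supportedOn.1 hv i hiD)

lemma restr_mem_supportedOn (D : Finset (Fin N)) (v : Fin N → ℝ) :
    restr D v ∈ supportedOn D :=
  mem_supportedOn.2 fun _ hi => if_neg hi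

lemma restr_eq_self {D : Finset (Fin N)} {v : Fin N → ℝ} (hv : v ∈ supportedOn D) :
    restr D v = v := by
  funext i
  by_cases hi : i ∈ D
  · exact if_pos hi
  · exact (if_neg hi).trans (mem_supportedOn.1 hv i hi).symm

lemma restr_add (D : Finset (Fin N)) (v w : Fin N → ℝ) :
    restr D (v + w) = restr D v + restr D w := by
  funext i; by_cases hi : i ∈ D <;> simp [restr, hi]

lemma restr_sub (D : Finset (Fin N)) (v w : Fin N → ℝ) :
    restr D (v - w) = restr D v - restr D w := by
  funext i; by_cases hi : i ∈ D <;> simp [restr, hi]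

lemma restr_smul (D : Finset (Fin N)) (c : ℝ) (v : Fin N → ℝ) :
    restr D (c • v) = c • restr D v := by
  funext i; by_cases hi : i ∈ D <;> simp [restr, hi]

lemma restr_dotProduct_restr (D : Finset (Fin N)) (v : Fin N → ℝ) :
    restr D v ⬝ᵥ restr D v = restr D v ⬝ᵥ v := by
  refine sum_congr rfl fun i _ => ?_
  by_cases hi : i ∈ D <;> simp [restr, hi]

lemma enormR_restr_sq (D : Finset (Fin N)) (v : Fin N → ℝ) :
    enormR (restr D v) ^ 2 = ∑ i ∈ D, v i ^ 2 := by
  rw [enormR, Real.sq_sqrt (by positivity)]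
  simp only [restr, ite_pow, ne_eq, OfNat.ofNat_ne_zero, not_false_eq_true, zero_pow]
  rw [sum_ite_mem, univ_inter]

lemma enormR_restr_mono {D E : Finset (Fin N)} (h : D ⊆ E) (v : Fin N → ℝ) :
    enormR (restr D v) ≤ enormR (restr E v) := by
  rw [← pow_le_pow_iff_left₀ (enormR_nonneg _) (enormR_nonneg _) two_ne_zero,
    enormR_restr_sq, enormR_restr_sq]
  exact sum_le_sum_of_subset_of_nonneg h fun i _ _ => sq_nonneg _

end Support

section Polarization

variable {α : Type*} [Fintype α] {M : Matrix α α ℝ}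

lemma _root_.Matrix.IsSymm.dotProduct_mulVec_comm (hM : M.IsSymm) (a b : α → ℝ) :
    b ⬝ᵥ M *ᵥ a = a ⬝ᵥ M *ᵥ b := by
  rw [dotProduct_mulVec, dotProduct_comm, ← mulVec_transpose, hM.eq]

lemma dotProduct_mulVec_le_of_abs_le (hM : M.IsSymm) {p : Submodule ℝ (α → ℝ)} {δ : ℝ}
    (hδ : 0 ≤ δ) (hQ : ∀ a ∈ p, |a ⬝ᵥ M *ᵥ a| ≤ δ * enormR a ^ 2)
    {a b : α → ℝ} (ha : a ∈ p) (hb : b ∈ p) :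
    a ⬝ᵥ M *ᵥ b ≤ δ * (enormR a * enormR b) := by
  -- Polarizing with `s • a ± b` gives a quadratic in `s` that is nonnegative everywhere,
  -- so its discriminant is nonpositive.
  have hquad : ∀ s : ℝ,
      0 ≤ δ * enormR a ^ 2 * (s * s) + -(2 * (a ⬝ᵥ M *ᵥ b)) * s + δ * enormR b ^ 2 := by
    intro s
    have hplus := (abs_le.1 (hQ _ (p.add_mem (p.smul_mem s ha) hb))).2
    have hminus := (abs_le.1 (hQ _ (p.sub_mem (p.smul_mem s ha) hb))).1
    simp only [enormR_sq, mulVec_add, mulVec_sub, mulVec_smul, dotProduct_add, add_dotProduct,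
      dotProduct_sub, sub_dotProduct, dotProduct_smul, smul_dotProduct, smul_eq_mul,
      hM.dotProduct_mulVec_comm a b, dotProduct_comm b a] at hplus hminus ⊢
    nlinarith
  have hdisc := discrim_le_zero hquad
  rw [discrim] at hdisc
  refine le_of_abs_le (abs_le_of_sq_le_sq ?_
    (mul_nonneg hδ (mul_nonneg (enormR_nonneg a) (enormR_nonneg b))))
  nlinarith

lemma enormR_restr_mulVec_le {N : ℕ} {M : Matrix (Fin N) (Fin N) ℝ} (hM : M.IsSymm)
    {D : Finset (Fin N)} {δ : ℝ} (hδ : 0 ≤ δ)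
    (hQ : ∀ a ∈ supportedOn D, |a ⬝ᵥ M *ᵥ a| ≤ δ * enormR a ^ 2)
    {v : Fin N → ℝ} (hv : v ∈ supportedOn D) :
    enormR (restr D (M *ᵥ v)) ≤ δ * enormR v := by
  set z := restr D (M *ᵥ v)
  have hz : enormR z ^ 2 ≤ δ * enormR v * enormR z := by
    calc enormR z ^ 2 = z ⬝ᵥ M *ᵥ v := by rw [enormR_sq, restr_dotProduct_restr]
      _ ≤ δ * (enormR z * enormR v) :=
        dotProduct_mulVec_le_of_abs_le hM hδ hQ (restr_mem_supportedOn _ _) hv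
      _ = δ * enormR v * enormR z := by ring
  exact le_of_sq_le_mul (mul_nonneg hδ (enormR_nonneg v)) hz

end Polarization

section RIP

variable {n N m : ℕ} {A : Matrix (Fin n) (Fin N) ℝ} {L U : ℝ}

lemma dotProduct_gram_mulVec (A : Matrix (Fin n) (Fin N) ℝ) (a : Fin N → ℝ) :
    a ⬝ᵥ (Aᵀ * A) *ᵥ a = (A *ᵥ a) ⬝ᵥ (A *ᵥ a) := by
  rw [← mulVec_mulVec, dotProduct_mulVec, vecMul_transpose]

lemma abs_dotProduct_mulVec_le_of_aRIP (hA : aRIP A m L U) {ω : ℝ} (hω : 0 ≤ ω)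
    {a : Fin N → ℝ} (ha : sparse m a) :
    |a ⬝ᵥ (1 - ω • (Aᵀ * A)) *ᵥ a| ≤
      max (ω * (1 + U) - 1) (1 - ω * (1 - L)) * enormR a ^ 2 := by
  obtain ⟨hlo, hhi⟩ := hA a ha
  rw [sub_mulVec, one_mulVec, smul_mulVec, dotProduct_sub, dotProduct_smul, smul_eq_mul,
    dotProduct_gram_mulVec, ← enormR_sq, ← enormR_sq, abs_le]
  have hmax₁ := le_max_left (ω * (1 + U) - 1) (1 - ω * (1 - L))
  have hmax₂ := le_max_right (ω * (1 + U) - 1) (1 - ω * (1 - L))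
  have ha2 := sq_nonneg (enormR a)
  constructor <;> nlinarith

lemma enormR_mulVec_le_of_aRIP (hA : aRIP A m L U) {v : Fin N → ℝ} (hv : sparse m v) :
    enormR (A *ᵥ v) ≤ √(1 + U) * enormR v :=
  calc enormR (A *ᵥ v) = √(enormR (A *ᵥ v) ^ 2) := (Real.sqrt_sq (enormR_nonneg _)).symm
    _ ≤ √((1 + U) * enormR v ^ 2) := Real.sqrt_le_sqrt (hA v hv).2
    _ = √(1 + U) * enormR v := by
      rw [Real.sqrt_mul' _ (sq_nonneg _), Real.sqrt_sq (enormR_nonneg _)]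

lemma enormR_restr_transpose_mulVec_le (hA : aRIP A m L U) {B : Finset (Fin N)}
    (hB : B.card ≤ m) (e : Fin n → ℝ) :
    enormR (restr B (Aᵀ *ᵥ e)) ≤ √(1 + U) * enormR e := by
  set w := restr B (Aᵀ *ᵥ e)
  have hw : enormR w ^ 2 ≤ √(1 + U) * enormR e * enormR w :=
    calc enormR w ^ 2 = (A *ᵥ w) ⬝ᵥ e := by
          rw [enormR_sq, restr_dotProduct_restr, dotProduct_mulVec, vecMul_transpose]
      _ ≤ enormR (A *ᵥ w) * enormR e := dotProduct_le_enormR_mul _ _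
      _ ≤ √(1 + U) * enormR w * enormR e := by
          gcongr
          · exact enormR_nonneg e
          · exact enormR_mulVec_le_of_aRIP hA
              (sparse_of_mem_supportedOn (restr_mem_supportedOn _ _) hB)
      _ = √(1 + U) * enormR e * enormR w := by ring
  exact le_of_sq_le_mul (mul_nonneg (Real.sqrt_nonneg _) (enormR_nonneg e)) hw

end RIP

section Thresholding

lemma sum_le_sum_of_card_le_of_forall_le {ι : Type*} {P Q : Finset ι} {f : ι → ℝ}
    (hcard : P.card ≤ Q.card) (hf : ∀ i ∈ P, ∀ j ∈ Q, f i ≤ f j) (hQ : ∀ j ∈ Q, 0 ≤ f j) :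
    ∑ i ∈ P, f i ≤ ∑ j ∈ Q, f j := by
  rcases Q.eq_empty_or_nonempty with rfl | hQne
  · rw [card_empty, Nat.le_zero, card_eq_zero] at hcard
    simp [hcard]
  · set c := Q.inf' hQne f
    calc ∑ i ∈ P, f i ≤ P.card • c :=
          sum_le_card_nsmul _ _ _ fun i hi => le_inf' _ _ fun j hj => hf i hi j hj
      _ ≤ Q.card • c := nsmul_le_nsmul_left (le_inf' _ _ hQ) hcard
      _ ≤ ∑ j ∈ Q, f j := card_nsmul_le_sum _ _ _ fun j hj => inf'_le _ hj

variable {N : ℕ}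

lemma enormR_restr_sub_restr_le {S T : Finset (Fin N)} (hST : S.card ≤ T.card)
    {u x : Fin N → ℝ} (hsel : selects T u) (hx : x ∈ supportedOn S) :
    enormR (restr (S ∪ T) (u - restr T u)) ≤ enormR (restr (S ∪ T) (u - x)) := by
  rw [← pow_le_pow_iff_left₀ (enormR_nonneg _) (enormR_nonneg _) two_ne_zero,
    enormR_restr_sq, enormR_restr_sq]
  calc ∑ i ∈ S ∪ T, (u - restr T u) i ^ 2 = ∑ i ∈ S \ T, (u - restr T u) i ^ 2 := by
        refine (sum_subset (fun i hi => mem_union_left _ (mem_sdiff.1 hi).1) ?_).symm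
        intro i hi hi'
        have hiT : i ∈ T := by_contra fun hiT =>
          hi' (mem_sdiff.2 ⟨(mem_union.1 hi).resolve_right hiT, hiT⟩)
        simp [restr, hiT]
    _ = ∑ i ∈ S \ T, u i ^ 2 := sum_congr rfl fun i hi => by simp [restr, (mem_sdiff.1 hi).2]
    _ ≤ ∑ i ∈ T \ S, u i ^ 2 :=
        sum_le_sum_of_card_le_of_forall_le (card_sdiff_le_card_sdiff_iff.2 hST)
          (fun i hi j hj => sq_le_sq.2 (hsel j (mem_sdiff.1 hj).1 i (mem_sdiff.1 hi).2))
          fun _ _ => sq_nonneg _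
    _ = ∑ i ∈ T \ S, (u - x) i ^ 2 :=
        sum_congr rfl fun i hi => by simp [mem_supportedOn.1 hx i (mem_sdiff.1 hi).2]
    _ ≤ ∑ i ∈ S ∪ T, (u - x) i ^ 2 :=
        sum_le_sum_of_subset_of_nonneg (fun i hi => mem_union_right _ (mem_sdiff.1 hi).1)
          fun _ _ _ => sq_nonneg _

lemma enormR_sub_restr_le_two_mul {S T : Finset (Fin N)} (hST : S.card ≤ T.card)
    {u x : Fin N → ℝ} (hsel : selects T u) (hx : x ∈ supportedOn S) :
    enormR (x - restr T u) ≤ 2 * enormR (restr (S ∪ T) (x - u)) := by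
  have hxT : x - restr T u ∈ supportedOn (S ∪ T) :=
    sub_mem (supportedOn_mono subset_union_left hx)
      (supportedOn_mono subset_union_right (restr_mem_supportedOn _ _))
  have hthresh : enormR (restr (S ∪ T) (u - restr T u)) ≤ enormR (restr (S ∪ T) (x - u)) := by
    rw [restr_sub _ x, enormR_sub_comm, ← restr_sub]
    exact enormR_restr_sub_restr_le hST hsel hx
  calc enormR (x - restr T u) = enormR (restr (S ∪ T) (x - restr T u)) := by
        rw [restr_eq_self hxT]
    _ = enormR (restr (S ∪ T) (x - u) + restr (S ∪ T) (u - restr T u)) := by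
        rw [← restr_add, sub_add_sub_cancel]
    _ ≤ enormR (restr (S ∪ T) (x - u)) + enormR (restr (S ∪ T) (u - restr T u)) :=
        enormR_add_le _ _
    _ ≤ 2 * enormR (restr (S ∪ T) (x - u)) := by linarith

end Thresholding

section Iteration

variable {n N k : ℕ} {A : Matrix (Fin n) (Fin N) ℝ} {L₂ U₂ L₃ U₃ ω : ℝ}

lemma iht_error_step_le (h₂ : aRIP A (2 * k) L₂ U₂) (h₃ : aRIP A (3 * k) L₃ U₃) (hω : 0 < ω)
    (hδ : 0 ≤ max (ω * (1 + U₃) - 1) (1 - ω * (1 - L₃)))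
    {S C T : Finset (Fin N)} (hS : S.card ≤ k) (hC : C.card ≤ k) (hT : T.card = k)
    {x z u : Fin N → ℝ} {e : Fin n → ℝ} (hx : x ∈ supportedOn S) (hz : z ∈ supportedOn C)
    (hu : u = z + ω • Aᵀ *ᵥ (A *ᵥ x + e - A *ᵥ z)) (hsel : selects T u) :
    enormR (x - restr T u) ≤
      2 * max (ω * (1 + U₃) - 1) (1 - ω * (1 - L₃)) * enormR (x - z) +
        2 * ω * √(1 + U₂) * enormR e := by
  set δ := max (ω * (1 + U₃) - 1) (1 - ω * (1 - L₃))
  set M : Matrix (Fin N) (Fin N) ℝ := 1 - ω • (Aᵀ * A)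
  have hM : M.IsSymm := by
    simp only [M, Matrix.IsSymm, transpose_sub, transpose_one, transpose_smul, transpose_mul,
      transpose_transpose]
  have hxu : x - u = M *ᵥ (x - z) - ω • Aᵀ *ᵥ e := by
    rw [hu]
    simp only [M, sub_mulVec, one_mulVec, smul_mulVec, ← mulVec_mulVec, mulVec_sub, mulVec_add,
      smul_add, smul_sub]
    abel
  have hxz : x - z ∈ supportedOn (S ∪ C ∪ T) :=
    sub_mem (supportedOn_mono (subset_union_left.trans subset_union_left) hx)
      (supportedOn_mono (subset_union_right.trans subset_union_left) hz)
  have hcard₃ : (S ∪ C ∪ T).card ≤ 3 * k := by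
    have := card_union_le (S ∪ C) T
    have := card_union_le S C
    omega
  have hcard₂ : (S ∪ T).card ≤ 2 * k := by
    have := card_union_le S T
    omega
  have hgram : enormR (restr (S ∪ T) (M *ᵥ (x - z))) ≤ δ * enormR (x - z) :=
    (enormR_restr_mono (union_subset_union subset_union_left subset_rfl) _).trans <|
      enormR_restr_mulVec_le hM hδ (fun a ha => abs_dotProduct_mulVec_le_of_aRIP h₃ hω.le
        (sparse_of_mem_supportedOn ha hcard₃)) hxz
  have hnoise := enormR_restr_transpose_mulVec_le h₂ hcard₂ e
  have hxu_le : enormR (restr (S ∪ T) (x - u)) ≤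
      δ * enormR (x - z) + ω * (√(1 + U₂) * enormR e) := by
    rw [hxu, restr_sub, restr_smul]
    refine (enormR_sub_le _ _).trans ?_
    rw [enormR_smul, abs_of_pos hω]
    gcongr
  calc enormR (x - restr T u) ≤ 2 * enormR (restr (S ∪ T) (x - u)) :=
        enormR_sub_restr_le_two_mul (hS.trans hT.ge) hsel hx
    _ ≤ _ := by linarith

end Iteration

lemma le_pow_mul_add_div_of_le_mul_add {a : ℕ → ℝ} {μ c : ℝ} (hμ0 : 0 ≤ μ) (hμ1 : μ < 1)
    (hc : 0 ≤ c) (h : ∀ l, a (l + 1) ≤ μ * a l + c) (l : ℕ) :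
    a l ≤ μ ^ l * a 0 + c / (1 - μ) := by
  have h1μ : 0 < 1 - μ := by linarith
  induction l with
  | zero => simpa using div_nonneg hc h1μ.le
  | succ l ih =>
    calc a (l + 1) ≤ μ * a l + c := h l
      _ ≤ μ * (μ ^ l * a 0 + c / (1 - μ)) + c := by gcongr
      _ = μ ^ (l + 1) * a 0 + c / (1 - μ) := by field_simp; ring

end IHT

open IHT in
theorem stmt15_general {n N k : ℕ} (A : Matrix (Fin n) (Fin N) ℝ)
    (L₂ U₂ L₃ U₃ : ℝ)
    (hL₃0 : 0 ≤ L₃) (hU₃0 : 0 ≤ U₃)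
    (h₂ : aRIP A (2 * k) L₂ U₂) (h₃ : aRIP A (3 * k) L₃ U₃)
    (ω : ℝ) (hω0 : 0 < ω)
    (μ ξ : ℝ)
    (hμ : μ = 2 * Real.sqrt 2 * max (ω * (1 + U₃) - 1) (1 - ω * (1 - L₃)))
    (hξ : ξ = 2 * ω * Real.sqrt (1 + U₂))
    (hμ1 : μ < 1)
    (x : Fin N → ℝ) (hx : sparse k x) (e y : Fin n → ℝ)
    (hy : y = fun i => A.mulVec x i + e i)
    (xs u : ℕ → Fin N → ℝ) (Ts : ℕ → Finset (Fin N))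
    (hxs0 : xs 0 = 0)
    (hu : ∀ l : ℕ, u (l + 1) =
      fun i => xs l i + ω * Aᵀ.mulVec (fun j => y j - A.mulVec (xs l) j) i)
    (hTcard : ∀ l : ℕ, (Ts (l + 1)).card = k)
    (hTsel : ∀ l : ℕ, selects (Ts (l + 1)) (u (l + 1)))
    (hxsucc : ∀ l : ℕ, xs (l + 1) = restr (Ts (l + 1)) (u (l + 1))) :
    ∀ l : ℕ, enormR (fun i => x i - xs l i) ≤
      μ ^ l * enormR x + (ξ / (1 - μ)) * enormR e := by
  set δ := max (ω * (1 + U₃) - 1) (1 - ω * (1 - L₃))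
  have hδ0 : 0 ≤ δ := by
    have := le_max_left (ω * (1 + U₃) - 1) (1 - ω * (1 - L₃))
    have := le_max_right (ω * (1 + U₃) - 1) (1 - ω * (1 - L₃))
    nlinarith [mul_nonneg hω0.le (add_nonneg hL₃0 hU₃0)]
  have h2δ : 2 * δ ≤ μ := by
    rw [hμ]
    nlinarith [Real.one_lt_sqrt_two]
  have hsupp : ∀ l, ∃ C : Finset (Fin N), C.card ≤ k ∧ xs l ∈ supportedOn C
    | 0 => ⟨∅, by simp, hxs0 ▸ zero_mem _⟩
    | l + 1 => ⟨Ts (l + 1), (hTcard l).le, hxsucc l ▸ restr_mem_supportedOn _ _⟩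
  have hstep : ∀ l, enormR (x - xs (l + 1)) ≤ μ * enormR (x - xs l) + ξ * enormR e := by
    intro l
    obtain ⟨C, hC, hz⟩ := hsupp l
    calc enormR (x - xs (l + 1)) ≤ 2 * δ * enormR (x - xs l) + ξ * enormR e := by
          rw [hxsucc l, hξ]
          exact iht_error_step_le h₂ h₃ hω0 hδ0 hx hC (hTcard l)
            (mem_supportedOn_filter_ne x) hz (by rw [hu l, hy]; rfl) (hTsel l)
      _ ≤ μ * enormR (x - xs l) + ξ * enormR e := by
          gcongr
          exact enormR_nonneg _
  have hξ0 : 0 ≤ ξ := by rw [hξ]; positivity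
  intro l
  have h := le_pow_mul_add_div_of_le_mul_add (a := fun l => enormR (x - xs l))
    (by linarith) hμ1
    (mul_nonneg hξ0 (enormR_nonneg e)) hstep l
  simp only [hxs0, sub_zero, ← div_mul_eq_mul_div] at h
  exact h

theorem stmt15 {n N k : ℕ} (A : Matrix (Fin n) (Fin N) ℝ)
    (L₂ U₂ L₃ U₃ : ℝ)
    (hL₂0 : 0 ≤ L₂) (hU₂0 : 0 ≤ U₂) (hL₃0 : 0 ≤ L₃) (hU₃0 : 0 ≤ U₃)
    (h₂ : aRIP A (2 * k) L₂ U₂) (h₃ : aRIP A (3 * k) L₃ U₃)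
    (ω : ℝ) (hω0 : 0 < ω) (hω1 : ω < 1)
    (μ ξ : ℝ)
    (hμ : μ = 2 * Real.sqrt 2 * max (ω * (1 + U₃) - 1) (1 - ω * (1 - L₃)))
    (hξ : ξ = 2 * ω * Real.sqrt (1 + U₂))
    (hμ1 : μ < 1)
    (x : Fin N → ℝ) (hx : sparse k x) (e y : Fin n → ℝ)
    (hy : y = fun i => A.mulVec x i + e i)
    (xs u : ℕ → Fin N → ℝ) (Ts : ℕ → Finset (Fin N))
    (hxs0 : xs 0 = 0)
    (hu : ∀ l : ℕ, u (l + 1) =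
      fun i => xs l i + ω * Aᵀ.mulVec (fun j => y j - A.mulVec (xs l) j) i)
    (hTcard : ∀ l : ℕ, (Ts (l + 1)).card = k)
    (hTsel : ∀ l : ℕ, selects (Ts (l + 1)) (u (l + 1)))
    (hxsucc : ∀ l : ℕ, xs (l + 1) = restr (Ts (l + 1)) (u (l + 1))) :
    ∀ l : ℕ, enormR (fun i => x i - xs l i) ≤
      μ ^ l * enormR x + (ξ / (1 - μ)) * enormR e :=
  stmt15_general A L₂ U₂ L₃ U₃ hL₃0 hU₃0 h₂ h₃ ω hω0 μ ξ hμ hξ hμ1 x hx e y hy xs u Ts hxs0 hu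
    hTcard hTsel hxsucc
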